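/- (Theorem 1, part 1.) Let V : ℝ → ℝ be a differentiable, convex, nonnegative potential, let k ∈ {0, −1}, and let θ, σ, φ, ψ, b be differentiable real-valued functions on [t₀, ∞) with b > 0 satisfying the Einstein–Klein–Gordon evolution system, the relation b'/b = (θ − √3σ)/3, and the constraint equation (1/3)θ² + k/b² = σ² + V(φ) + ψ²/2 at every time. If θ(t₀) ≥ 0, then θ(t) ≥ 0 and θ'(t) ≤ 0 for all t ≥ t₀. -/

import Mathlib

/-!
Eliminating `θ²` from the Raychaudhuri equation with the constraint gives
`θ' = k/b² - 3σ² - 3ψ²/2 ≤ 0` and `θ' + θ² = 3V(φ) - 2k/b² ≥ 0`. The lower bound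
says that `θ · exp (∫ θ)` is nondecreasing, so `θ` cannot become negative once
`θ(t₀) ≥ 0`.
-/

open Set Real

lemma nonneg_of_deriv_add_mul_nonneg {f g : ℝ → ℝ} {a b : ℝ} (hab : a ≤ b)
    (hf : ContinuousOn f (Icc a b)) (hf' : DifferentiableOn ℝ f (Ioo a b))
    (hg : ContinuousOn g (Icc a b)) (h : ∀ t ∈ Ioo a b, 0 ≤ deriv f t + g t * f t)
    (ha : 0 ≤ f a) : 0 ≤ f b := by
  set G : ℝ → ℝ := fun u => ∫ s in a..u, g s
  have hG : ContinuousOn G (Icc a b) := by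
    simpa only [uIcc_of_le hab] using
      intervalIntegral.continuousOn_primitive_interval (hg.integrableOn_Icc.mono_set
        (uIcc_of_le hab).subset)
  have hG' : ∀ t ∈ Ioo a b, HasDerivAt G (g t) t := fun t ht =>
    intervalIntegral.integral_hasDerivAt_right
      ((hg.mono (Icc_subset_Icc_right ht.2.le)).intervalIntegrable_of_Icc ht.1.le)
      ((hg.mono Ioo_subset_Icc_self).stronglyMeasurableAtFilter isOpen_Ioo t ht)
      (hg.continuousAt (Icc_mem_nhds ht.1 ht.2))
  set w : ℝ → ℝ := fun u => f u * exp (G u)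
  have hw : ∀ t ∈ Ioo a b, HasDerivAt w ((deriv f t + g t * f t) * exp (G t)) t := by
    intro t ht
    have hexp : HasDerivAt (fun u => exp (G u)) (exp (G t) * g t) t := (hG' t ht).exp
    have hfw := (hf'.differentiableAt (isOpen_Ioo.mem_nhds ht)).hasDerivAt.mul hexp
    exact hfw.congr_deriv (by ring)
  have hmono : MonotoneOn w (Icc a b) := by
    refine monotoneOn_of_deriv_nonneg (convex_Icc a b) (hf.mul hG.rexp) ?_ ?_ <;>
      rw [interior_Icc]
    · exact fun t ht => (hw t ht).differentiableAt.differentiableWithinAt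
    · exact fun t ht => (hw t ht).deriv ▸ mul_nonneg (h t ht) (exp_pos _).le
  have hwa : w a = f a := by simp [w, G]
  have hwb : 0 ≤ f b * exp (G b) :=
    ha.trans (hwa ▸ hmono (left_mem_Icc.2 hab) (right_mem_Icc.2 hab) hab)
  exact (mul_nonneg_iff_of_pos_right (exp_pos _)).1 hwb

lemma raychaudhuri_nonpos {θ θ' σ ψ v c : ℝ} (hc : c ≤ 0)
    (hθ' : θ' = -(1 / 3) * θ ^ 2 - 2 * σ ^ 2 + v - ψ ^ 2)
    (hcon : (1 / 3) * θ ^ 2 + c = σ ^ 2 + v + ψ ^ 2 / 2) : θ' ≤ 0 := by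
  linarith [sq_nonneg σ, sq_nonneg ψ]

lemma raychaudhuri_add_sq_nonneg {θ θ' σ ψ v c : ℝ} (hc : c ≤ 0) (hv : 0 ≤ v)
    (hθ' : θ' = -(1 / 3) * θ ^ 2 - 2 * σ ^ 2 + v - ψ ^ 2)
    (hcon : (1 / 3) * θ ^ 2 + c = σ ^ 2 + v + ψ ^ 2 / 2) : 0 ≤ θ' + θ ^ 2 := by
  linarith

theorem theorem1_part1
    (V : ℝ → ℝ) (hVnn : ∀ x, 0 ≤ V x)
    (k : ℝ) (hk : k = 0 ∨ k = -1)
    (t₀ : ℝ) (θ σ φ ψ b : ℝ → ℝ)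
    (hθ : ∀ t ∈ Set.Ici t₀, DifferentiableAt ℝ θ t)
    (eθ : ∀ t ∈ Set.Ici t₀,
      deriv θ t = -(1 / 3) * θ t ^ 2 - 2 * σ t ^ 2 + V (φ t) - ψ t ^ 2)
    (hcon : ∀ t ∈ Set.Ici t₀,
      (1 / 3) * θ t ^ 2 + k / b t ^ 2 = σ t ^ 2 + V (φ t) + ψ t ^ 2 / 2)
    (hθ₀ : 0 ≤ θ t₀) :
    ∀ t ∈ Set.Ici t₀, 0 ≤ θ t ∧ deriv θ t ≤ 0 := by
  have hcurv : ∀ t, k / b t ^ 2 ≤ 0 := fun t =>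
    div_nonpos_of_nonpos_of_nonneg (by rcases hk with rfl | rfl <;> norm_num) (sq_nonneg _)
  intro t ht
  refine ⟨?_, raychaudhuri_nonpos (hcurv t) (eθ t ht) (hcon t ht)⟩
  have hθ_diff : ∀ u ∈ Icc t₀ t, DifferentiableAt ℝ θ u := fun u hu => hθ u hu.1
  have hθ_cont : ContinuousOn θ (Icc t₀ t) := fun u hu =>
    (hθ_diff u hu).continuousAt.continuousWithinAt
  refine nonneg_of_deriv_add_mul_nonneg ht hθ_cont
    (fun u hu => (hθ_diff u (Ioo_subset_Icc_self hu)).differentiableWithinAt) hθ_cont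
    (fun u hu => ?_) hθ₀
  have hu' : u ∈ Ici t₀ := hu.1.le
  simpa only [← sq] using
    raychaudhuri_add_sq_nonneg (hcurv u) (hVnn (φ u)) (eθ u hu') (hcon u hu')
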